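/- Let x, y ∈ [0,1), m a positive integer, and v = x + y·φ^{-m}. Suppose there exists λ ≥ 1 with λ + 2 ≤ m and δ_λ(x) = δ_{λ+1}(x) = 0, where δ_i denotes the base-φ digits. Define w = ∑_{i=λ+2}^∞ δ_i(x)·φ^{-i} + ∑_{i=m+1}^∞ δ_{i-m}(y)·φ^{-i}. Then v, w ∈ [0,1), w < φ^{-λ}, and the base-φ digits of v satisfy δ_i(v) = δ_i(x) for i ≤ λ and δ_i(v) = δ_i(w) for i > λ. -/

import Mathlib

open Real goldenRatio

/-- The map `T x = φ x mod 1` of the base-`φ` expansion. -/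
noncomputable def phiMap (y : ℝ) : ℝ := Int.fract (goldenRatio * y)

/-- The `i`-th digit (for `i ≥ 1`) of the base-`φ` expansion of `x ∈ [0,1)`. -/
noncomputable def phiDigit (x : ℝ) (i : ℕ) : ℤ :=
  ⌊goldenRatio * (phiMap^[i - 1] x)⌋

/-!
While the first `λ` iterates of the `φ`-map are computed, the perturbation `y φ^{-m}` of `x`
stays too small to change any digit: two consecutive zero digits at positions `λ, λ + 1` force
`T^j x < 1 - φ^{-(λ - j + 2)}` for `j ≤ λ`, and the perturbation has grown only to
`φ^{-(m - j)} ≤ φ^{-(λ - j + 2)}` by then. Hence `T^j v = T^j x + φ^j y φ^{-m}` for `j ≤ λ`, the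
first `λ` digits of `v` and `x` agree, and `w = φ^{-λ} T^λ v`; since `T^λ w = T^λ v`, the
remaining digits of `v` are those of `w`.
-/

open Filter Topology

lemma inv_goldenRatio_pos : 0 < φ⁻¹ := inv_pos.2 goldenRatio_pos

lemma inv_goldenRatio_lt_one : φ⁻¹ < 1 := inv_lt_one_of_one_lt₀ one_lt_goldenRatio

lemma inv_goldenRatio_add_sq : φ⁻¹ + φ⁻¹ ^ 2 = 1 := by
  rw [inv_goldenRatio]
  linear_combination goldenConj_sq

section PhiExpansion

variable {s t : ℝ}

lemma phiMap_mem_Ico (t : ℝ) : phiMap t ∈ Set.Ico (0 : ℝ) 1 :=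
  ⟨Int.fract_nonneg _, Int.fract_lt_one _⟩

lemma iterate_succ_phiMap_mem_Ico (t : ℝ) (n : ℕ) : phiMap^[n + 1] t ∈ Set.Ico (0 : ℝ) 1 := by
  rw [Function.iterate_succ_apply']
  exact phiMap_mem_Ico _

lemma iterate_phiMap_mem_Ico (ht : t ∈ Set.Ico (0 : ℝ) 1) (n : ℕ) :
    phiMap^[n] t ∈ Set.Ico (0 : ℝ) 1 := by
  cases n with
  | zero => exact ht
  | succ n => exact iterate_succ_phiMap_mem_Ico t n

lemma goldenRatio_mul_iterate_phiMap (t : ℝ) (n : ℕ) :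
    φ * phiMap^[n] t = phiDigit t (n + 1) + phiMap^[n + 1] t := by
  rw [Function.iterate_succ_apply', phiDigit, phiMap, Nat.add_sub_cancel, Int.floor_add_fract]

lemma iterate_phiMap_eq_inv_mul (t : ℝ) (n : ℕ) :
    phiMap^[n] t = φ⁻¹ * (phiDigit t (n + 1) + phiMap^[n + 1] t) := by
  rw [← goldenRatio_mul_iterate_phiMap, inv_mul_cancel_left₀ goldenRatio_ne_zero]

lemma phiDigit_nonneg (ht : t ∈ Set.Ico (0 : ℝ) 1) (i : ℕ) : 0 ≤ phiDigit t i :=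
  Int.floor_nonneg.2 (mul_nonneg goldenRatio_pos.le (iterate_phiMap_mem_Ico ht _).1)

lemma phiDigit_le_one (ht : t ∈ Set.Ico (0 : ℝ) 1) (i : ℕ) : phiDigit t i ≤ 1 := by
  have hT := iterate_phiMap_mem_Ico ht (i - 1)
  have : φ * phiMap^[i - 1] t < 2 := by nlinarith [goldenRatio_lt_two, hT.1, hT.2]
  have : phiDigit t i < 2 := Int.floor_lt.2 (by exact_mod_cast this)
  omega

lemma phiDigit_add_two_eq_zero (ht : t ∈ Set.Ico (0 : ℝ) 1) {n : ℕ}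
    (h : phiDigit t (n + 1) = 1) : phiDigit t (n + 2) = 0 := by
  have hT := iterate_phiMap_mem_Ico ht n
  have hT' := iterate_succ_phiMap_mem_Ico t n
  have hrec := goldenRatio_mul_iterate_phiMap t n
  rw [h, Int.cast_one] at hrec
  have hlt : phiMap^[n + 1] t < φ⁻¹ := by
    have := mul_lt_mul_of_pos_left hT.2 goldenRatio_pos
    rw [inv_goldenRatio, ← one_sub_goldenConj]
    linarith
  show ⌊φ * phiMap^[n + 1] t⌋ = 0
  rw [Int.floor_eq_zero_iff]
  refine ⟨mul_nonneg goldenRatio_pos.le hT'.1, ?_⟩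
  simpa only [mul_inv_cancel₀ goldenRatio_ne_zero] using mul_lt_mul_of_pos_left hlt goldenRatio_pos

lemma phiDigit_iterate_phiMap (t : ℝ) (n i : ℕ) :
    phiDigit (phiMap^[n] t) (i + 1) = phiDigit t (i + n + 1) := by
  simp only [phiDigit, Nat.add_sub_cancel, ← Function.iterate_add_apply]

lemma phiDigit_eq_of_iterate_phiMap_eq {n : ℕ} (h : phiMap^[n] s = phiMap^[n] t) {i : ℕ}
    (hi : n < i) : phiDigit s i = phiDigit t i := by
  obtain ⟨k, rfl⟩ : ∃ k, i = k + n + 1 := ⟨i - n - 1, by omega⟩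
  rw [← phiDigit_iterate_phiMap, ← phiDigit_iterate_phiMap, h]

lemma hasSum_sub_succ_of_antitone {a : ℕ → ℝ} (ha : Antitone a) (h : Tendsto a atTop (𝓝 0)) :
    HasSum (fun i ↦ a i - a (i + 1)) (a 0) := by
  rw [hasSum_iff_tendsto_nat_of_nonneg (fun i ↦ sub_nonneg.2 (ha i.le_succ))]
  simp_rw [Finset.sum_range_sub']
  simpa using tendsto_const_nhds.sub h

theorem hasSum_phiDigit (ht : t ∈ Set.Ico (0 : ℝ) 1) :
    HasSum (fun i : ℕ ↦ (phiDigit t (i + 1) : ℝ) * φ⁻¹ ^ (i + 1)) t := by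
  set a : ℕ → ℝ := fun k ↦ φ⁻¹ ^ k * phiMap^[k] t
  have hdiff (k : ℕ) : a k - a (k + 1) = (phiDigit t (k + 1) : ℝ) * φ⁻¹ ^ (k + 1) := by
    simp only [a]
    rw [iterate_phiMap_eq_inv_mul t k]
    ring
  have ha : Antitone a := antitone_nat_of_succ_le fun k ↦ by
    have := phiDigit_nonneg ht (k + 1)
    rw [← sub_nonneg, hdiff]
    positivity
  have hlim : Tendsto a atTop (𝓝 0) := by
    refine squeeze_zero (fun k ↦ ?_) (fun k ↦ ?_)
      (tendsto_pow_atTop_nhds_zero_of_lt_one inv_goldenRatio_pos.le inv_goldenRatio_lt_one)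
    · exact mul_nonneg (pow_nonneg inv_goldenRatio_pos.le _) (iterate_phiMap_mem_Ico ht k).1
    · exact mul_le_of_le_one_right (pow_nonneg inv_goldenRatio_pos.le _)
        (iterate_phiMap_mem_Ico ht k).2.le
  have hsum := hasSum_sub_succ_of_antitone ha hlim
  simp only [hdiff] at hsum
  simpa [a] using hsum

theorem hasSum_phiDigit_tail (ht : t ∈ Set.Ico (0 : ℝ) 1) (n : ℕ) :
    HasSum (fun i : ℕ ↦ (phiDigit t (i + n + 1) : ℝ) * φ⁻¹ ^ (i + n + 1))
      (φ⁻¹ ^ n * phiMap^[n] t) := by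
  refine ((hasSum_phiDigit (iterate_phiMap_mem_Ico ht n)).mul_left (φ⁻¹ ^ n)).congr_fun
    fun i ↦ ?_
  rw [phiDigit_iterate_phiMap, add_right_comm, pow_add _ (i + 1)]
  ring

end PhiExpansion

lemma goldenRatio_pow_mul_inv_pow {j n : ℕ} (h : j ≤ n) : φ ^ j * φ⁻¹ ^ n = φ⁻¹ ^ (n - j) := by
  rw [inv_pow_sub₀ goldenRatio_ne_zero h, inv_pow, mul_comm]

theorem iterate_phiMap_lt_of_phiDigit_eq_zero {x : ℝ} (hx : x ∈ Set.Ico (0 : ℝ) 1) {lam : ℕ}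
    (h1 : phiDigit x lam = 0) (h2 : phiDigit x (lam + 1) = 0) {j : ℕ} (hj : j ≤ lam) :
    phiMap^[j] x < 1 - φ⁻¹ ^ (lam - j + 2) := by
  suffices ∀ k j, j + k = lam → phiMap^[j] x < 1 - φ⁻¹ ^ (k + 2) from this _ _ (by omega)
  intro k
  induction k using Nat.strong_induction_on with
  | _ k ih =>
  intro j hjk
  have hg := inv_goldenRatio_add_sq
  have hg0 := inv_goldenRatio_pos
  have hrec := iterate_phiMap_eq_inv_mul x j
  obtain hd | hd : phiDigit x (j + 1) = 0 ∨ phiDigit x (j + 1) = 1 := by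
    have := phiDigit_nonneg hx (j + 1)
    have := phiDigit_le_one hx (j + 1)
    omega
  · rw [hd, Int.cast_zero, zero_add] at hrec
    rcases k with _ | k
    · have := (iterate_phiMap_mem_Ico hx (j + 1)).2
      rw [hrec]
      nlinarith
    · have hnext := ih k (by omega) (j + 1) (by omega)
      have hp : 0 < φ⁻¹ ^ (k + 2) := pow_pos hg0 _
      rw [hrec, show k + 1 + 2 = k + 2 + 1 by ring, pow_succ]
      nlinarith [inv_goldenRatio_lt_one]
  · -- a digit `1` is followed by a `0`, so the bound is propagated over two steps
    obtain ⟨k, rfl⟩ : ∃ k', k = k' + 2 := by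
      rcases k with _ | _ | k
      · obtain rfl : j = lam := by omega
        rw [h2] at hd
        exact absurd hd zero_ne_one
      · obtain rfl : lam = j + 1 := by omega
        rw [h1] at hd
        exact absurd hd zero_ne_one
      · exact ⟨k, rfl⟩
    have hrec' := iterate_phiMap_eq_inv_mul x (j + 1)
    rw [phiDigit_add_two_eq_zero hx hd, Int.cast_zero, zero_add] at hrec'
    have hnext : phiMap^[j + 1 + 1] x < 1 - φ⁻¹ ^ (k + 2) := ih k (by omega) (j + 2) (by omega)
    rw [hrec, hd, Int.cast_one, hrec', pow_add]
    nlinarith [mul_lt_mul_of_pos_left hnext (pow_pos hg0 2)]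

section Perturbation

variable {x e : ℝ} {n : ℕ}

lemma goldenRatio_mul_iterate_phiMap_add (j : ℕ) :
    φ * (phiMap^[j] x + φ ^ j * e) =
      phiDigit x (j + 1) + (phiMap^[j + 1] x + φ ^ (j + 1) * e) := by
  rw [mul_add, goldenRatio_mul_iterate_phiMap, pow_succ']
  ring

theorem iterate_phiMap_add_of_lt (he : 0 ≤ e) (h : ∀ j ≤ n, phiMap^[j] x + φ ^ j * e < 1)
    {j : ℕ} (hj : j ≤ n) : phiMap^[j] (x + e) = phiMap^[j] x + φ ^ j * e := by
  induction j with
  | zero => simp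
  | succ j ih =>
    rw [Function.iterate_succ_apply', ih (by omega), phiMap, goldenRatio_mul_iterate_phiMap_add,
      Int.fract_intCast_add, Int.fract_eq_self]
    exact ⟨add_nonneg (iterate_succ_phiMap_mem_Ico x j).1 (by positivity), h _ hj⟩

theorem phiDigit_add_of_lt (he : 0 ≤ e) (h : ∀ j ≤ n, phiMap^[j] x + φ ^ j * e < 1)
    {i : ℕ} (hi : 1 ≤ i) (hin : i ≤ n) : phiDigit (x + e) i = phiDigit x i := by
  obtain ⟨j, rfl⟩ : ∃ j, i = j + 1 := ⟨i - 1, by omega⟩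
  have hfrac : phiMap^[j + 1] x + φ ^ (j + 1) * e ∈ Set.Ico (0 : ℝ) 1 :=
    ⟨add_nonneg (iterate_succ_phiMap_mem_Ico x j).1 (by positivity), h _ hin⟩
  rw [phiDigit, Nat.add_sub_cancel, iterate_phiMap_add_of_lt he h (by omega),
    goldenRatio_mul_iterate_phiMap_add, Int.floor_intCast_add, Int.floor_eq_zero_iff.2 hfrac,
    add_zero]

end Perturbation

theorem iterate_phiMap_inv_pow_mul {u : ℝ} (hu : u ∈ Set.Ico (0 : ℝ) 1) (n : ℕ) :
    phiMap^[n] (φ⁻¹ ^ n * u) = u := by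
  have hzero (j : ℕ) : phiMap^[j] 0 = 0 := Function.iterate_fixed (by simp [phiMap]) j
  have hsmall (j : ℕ) (hj : j ≤ n) : phiMap^[j] 0 + φ ^ j * (φ⁻¹ ^ n * u) < 1 := by
    rw [hzero, zero_add, ← mul_assoc, goldenRatio_pow_mul_inv_pow hj]
    exact mul_lt_one_of_nonneg_of_lt_one_right
      (pow_le_one₀ inv_goldenRatio_pos.le inv_goldenRatio_lt_one.le) hu.1 hu.2
  have := iterate_phiMap_add_of_lt (mul_nonneg (pow_nonneg inv_goldenRatio_pos.le n) hu.1)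
    hsmall le_rfl
  rwa [zero_add, hzero, zero_add, ← mul_assoc, goldenRatio_pow_mul_inv_pow le_rfl, Nat.sub_self,
    pow_zero, one_mul] at this

theorem stmt7_general (x y : ℝ) (hx : x ∈ Set.Ico (0 : ℝ) 1) (hy : y ∈ Set.Ico (0 : ℝ) 1)
    (m : ℕ)
    (lam : ℕ) (hlm : lam + 2 ≤ m)
    (h1 : phiDigit x lam = 0) (h2 : phiDigit x (lam + 1) = 0)
    (v w : ℝ)
    (hv : v = x + y * φ⁻¹ ^ m)
    (hw : w = (∑' i : ℕ, (phiDigit x (i + lam + 2) : ℝ) * φ⁻¹ ^ (i + lam + 2)) +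
        ∑' i : ℕ, (phiDigit y (i + 1) : ℝ) * φ⁻¹ ^ (i + 1 + m)) :
    v ∈ Set.Ico (0 : ℝ) 1 ∧ w ∈ Set.Ico (0 : ℝ) 1 ∧ w < φ⁻¹ ^ lam ∧
      (∀ i, 1 ≤ i → i ≤ lam → phiDigit v i = phiDigit x i) ∧
      (∀ i, lam < i → phiDigit v i = phiDigit w i) := by
  set e := y * φ⁻¹ ^ m
  have he : 0 ≤ e := mul_nonneg hy.1 (pow_nonneg inv_goldenRatio_pos.le m)
  have hsmall (j : ℕ) (hj : j ≤ lam) : phiMap^[j] x + φ ^ j * e < 1 := by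
    have hxj := iterate_phiMap_lt_of_phiDigit_eq_zero hx h1 h2 hj
    have hej : φ ^ j * e ≤ φ⁻¹ ^ (lam - j + 2) := calc
      φ ^ j * e = y * φ⁻¹ ^ (m - j) := by rw [mul_left_comm, goldenRatio_pow_mul_inv_pow (by omega)]
      _ ≤ φ⁻¹ ^ (m - j) := mul_le_of_le_one_left (pow_nonneg inv_goldenRatio_pos.le _) hy.2.le
      _ ≤ φ⁻¹ ^ (lam - j + 2) :=
        pow_le_pow_of_le_one inv_goldenRatio_pos.le inv_goldenRatio_lt_one.le (by omega)
    linarith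
  have hvI : v ∈ Set.Ico (0 : ℝ) 1 := by
    refine ⟨hv ▸ add_nonneg hx.1 he, ?_⟩
    simpa [hv] using hsmall 0 (Nat.zero_le _)
  have hTv : phiMap^[lam] v = phiMap^[lam] x + φ ^ lam * e :=
    hv ▸ iterate_phiMap_add_of_lt he hsmall le_rfl
  have hwv : w = φ⁻¹ ^ lam * phiMap^[lam] v := by
    have hxsum : HasSum (fun i : ℕ ↦ (phiDigit x (i + lam + 2) : ℝ) * φ⁻¹ ^ (i + lam + 2)) _ :=
      hasSum_phiDigit_tail hx (lam + 1)
    have hysum := (hasSum_phiDigit hy).mul_right (φ⁻¹ ^ m)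
    simp only [mul_assoc, ← pow_add] at hysum
    rw [hw, hxsum.tsum_eq, hysum.tsum_eq, hTv, iterate_phiMap_eq_inv_mul x lam, h2,
      Int.cast_zero, zero_add, mul_add, ← mul_assoc, ← pow_succ, ← mul_assoc, ← mul_pow,
      inv_mul_cancel₀ goldenRatio_ne_zero, one_pow, one_mul]
  have hu := iterate_phiMap_mem_Ico hvI lam
  have hwlt : w < φ⁻¹ ^ lam := by
    rw [hwv]
    exact mul_lt_of_lt_one_right (pow_pos inv_goldenRatio_pos lam) hu.2
  refine ⟨hvI, ⟨hwv ▸ mul_nonneg (pow_nonneg inv_goldenRatio_pos.le _) hu.1,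
    hwlt.trans_le (pow_le_one₀ inv_goldenRatio_pos.le inv_goldenRatio_lt_one.le)⟩, hwlt,
    fun i hi hil ↦ hv ▸ phiDigit_add_of_lt he hsmall hi hil, fun i hi ↦ ?_⟩
  exact phiDigit_eq_of_iterate_phiMap_eq (by rw [hwv, iterate_phiMap_inv_pow_mul hu]) hi

theorem stmt7 (x y : ℝ) (hx : x ∈ Set.Ico (0 : ℝ) 1) (hy : y ∈ Set.Ico (0 : ℝ) 1)
    (m : ℕ) (hm : 1 ≤ m)
    (lam : ℕ) (hlam : 1 ≤ lam) (hlm : lam + 2 ≤ m)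
    (h1 : phiDigit x lam = 0) (h2 : phiDigit x (lam + 1) = 0)
    (v w : ℝ)
    (hv : v = x + y * φ⁻¹ ^ m)
    (hw : w = (∑' i : ℕ, (phiDigit x (i + lam + 2) : ℝ) * φ⁻¹ ^ (i + lam + 2)) +
        ∑' i : ℕ, (phiDigit y (i + 1) : ℝ) * φ⁻¹ ^ (i + 1 + m)) :
    v ∈ Set.Ico (0 : ℝ) 1 ∧ w ∈ Set.Ico (0 : ℝ) 1 ∧ w < φ⁻¹ ^ lam ∧
      (∀ i, 1 ≤ i → i ≤ lam → phiDigit v i = phiDigit x i) ∧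
      (∀ i, lam < i → phiDigit v i = phiDigit w i) :=
  stmt7_general x y hx hy m lam hlm h1 h2 v w hv hw
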